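/- arXiv:2602.06104 — 2 statements merged into one kernel-verified Lean document; each statement's English description precedes it below -/
import Mathlib

section
/- (Lemma 3.2 / Lemma C.1, reduction to finitely many coordinates.) Let μ be a probability measure on a measurable space Ω, let T : Ω → Ω' be a measurable map into a measurable space Ω', let g : Ω' → ℝ be measurable with g ≥ 0, and set L := g ∘ T and Z := ∫ g d(μ.map T) = ∫ L dμ, assumed to satisfy 0 < Z < ∞. Define the posterior measures ν := μ.withDensity(ω ↦ L(ω)/Z) on Ω and ν' := (μ.map T).withDensity(ω' ↦ g(ω')/Z) on Ω'. Then (i) ν.map T = ν', and (ii) the Kullback–Leibler divergence of ν from μ equals the Kullback–Leibler divergence of ν' from μ.map T. -/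
/-!
The posterior on `Ω` has density `d ∘ T` with respect to the prior, where `d = g / Z`, so its
pushforward along `T` is the measure with density `d` with respect to the pushed-forward prior.
Both log-likelihood ratios are then `log d`, read on `Ω'` directly or through `T`, and the change
of variables formula for `Measure.map` identifies their integrability and their integrals.
-/

open MeasureTheory Real
open scoped ENNReal NNReal

open scoped Classical in
/-- The Kullback–Leibler divergence of a measure `μ` from a measure `ν`
(in `ℝ≥0∞`, infinite unless `μ ≪ ν` and the log-likelihood ratio is
integrable). -/
noncomputable def klDiv {α : Type*} [MeasurableSpace α]
    (μ ν : Measure α) : ℝ≥0∞ :=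
  if μ ≪ ν ∧ Integrable (llr μ ν) μ
  then ENNReal.ofReal (∫ x, llr μ ν x ∂μ) else ⊤

namespace MeasureTheory

variable {α β : Type*} [MeasurableSpace α] [MeasurableSpace β]

theorem map_withDensity_comp (μ : Measure α) {T : α → β} (hT : Measurable T) {d : β → ℝ≥0∞}
    (hd : Measurable d) : (μ.withDensity (d ∘ T)).map T = (μ.map T).withDensity d := by
  ext s hs
  rw [Measure.map_apply hT hs, withDensity_apply _ (hT hs), withDensity_apply _ hs,
    setLIntegral_map hs hd hT]
  rfl

open scoped Classical in
theorem klDiv_of_llr_ae_eq {μ ν : Measure α} {f : α → ℝ} (hνμ : ν ≪ μ) (hf : llr ν μ =ᵐ[ν] f) :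
    klDiv ν μ = if Integrable f ν then ENNReal.ofReal (∫ x, f x ∂ν) else ⊤ := by
  simp only [klDiv, hνμ, true_and, integrable_congr hf, integral_congr_ae hf]

theorem llr_withDensity_ae_eq (μ : Measure α) [SigmaFinite μ] {d : α → ℝ≥0∞} (hd : Measurable d) :
    llr (μ.withDensity d) μ =ᵐ[μ.withDensity d] fun x => log (d x).toReal := by
  filter_upwards [withDensity_absolutelyContinuous μ d (Measure.rnDeriv_withDensity μ hd)]
    with x hx
  simp only [llr_def, hx]

open scoped Classical in
theorem klDiv_withDensity (μ : Measure α) [SigmaFinite μ] {d : α → ℝ≥0∞} (hd : Measurable d) :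
    klDiv (μ.withDensity d) μ =
      if Integrable (fun x => log (d x).toReal) (μ.withDensity d)
      then ENNReal.ofReal (∫ x, log (d x).toReal ∂μ.withDensity d) else ⊤ :=
  klDiv_of_llr_ae_eq (withDensity_absolutelyContinuous μ d) (llr_withDensity_ae_eq μ hd)

theorem klDiv_withDensity_comp (μ : Measure α) [IsFiniteMeasure μ] {T : α → β}
    (hT : Measurable T) {d : β → ℝ≥0∞} (hd : Measurable d) :
    klDiv (μ.withDensity (d ∘ T)) μ = klDiv ((μ.map T).withDensity d) (μ.map T) := by
  have hlog : Measurable fun y => log (d y).toReal := hd.ennreal_toReal.log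
  rw [klDiv_withDensity μ (hd.comp hT), klDiv_withDensity (μ.map T) hd,
    ← map_withDensity_comp μ hT hd,
    integrable_map_measure hlog.aestronglyMeasurable hT.aemeasurable,
    integral_map hT.aemeasurable hlog.aestronglyMeasurable]
  rfl

end MeasureTheory

theorem klDiv_posterior_map_eq_general
    {Ω Ω' : Type*} [MeasurableSpace Ω] [MeasurableSpace Ω']
    (μ : Measure Ω) [IsProbabilityMeasure μ]
    (T : Ω → Ω') (hT : Measurable T)
    (g : Ω' → ℝ) (hg_meas : Measurable g)
    (L : Ω → ℝ) (hL : L = g ∘ T)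
    (Z : ℝ)
    (ν : Measure Ω)
    (hν : ν = μ.withDensity (fun ω => ENNReal.ofReal (L ω / Z)))
    (ν' : Measure Ω')
    (hν' : ν' = (μ.map T).withDensity (fun ω' => ENNReal.ofReal (g ω' / Z))) :
    ν.map T = ν' ∧ klDiv ν μ = klDiv ν' (μ.map T) := by
  subst hL hν hν'
  have hd : Measurable fun ω' => ENNReal.ofReal (g ω' / Z) := (hg_meas.div_const Z).ennreal_ofReal
  -- fixing `d` through `hd` first avoids a costly higher-order unification of `d ∘ T` with the goal
  have hmap := map_withDensity_comp μ hT hd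
  have hkl := klDiv_withDensity_comp μ hT hd
  exact ⟨hmap, hkl⟩

/-- Reduction to finitely many coordinates: if the likelihood factors through
a measurable map `T`, then the pushforward of the posterior is the posterior
of the pushforward, and the information gain (KL divergence of posterior from
prior) is the same on both spaces. -/
theorem klDiv_posterior_map_eq
    {Ω Ω' : Type*} [MeasurableSpace Ω] [MeasurableSpace Ω']
    (μ : Measure Ω) [IsProbabilityMeasure μ]
    (T : Ω → Ω') (hT : Measurable T)
    (g : Ω' → ℝ) (hg_meas : Measurable g) (hg_nonneg : ∀ ω', 0 ≤ g ω')
    (L : Ω → ℝ) (hL : L = g ∘ T)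
    (hg_int : Integrable g (μ.map T))
    (Z : ℝ) (hZ : Z = ∫ ω', g ω' ∂(μ.map T)) (hZ' : Z = ∫ ω, L ω ∂μ)
    (hZ_pos : 0 < Z)
    (ν : Measure Ω)
    (hν : ν = μ.withDensity (fun ω => ENNReal.ofReal (L ω / Z)))
    (ν' : Measure Ω')
    (hν' : ν' = (μ.map T).withDensity (fun ω' => ENNReal.ofReal (g ω' / Z))) :
    ν.map T = ν' ∧ klDiv ν μ = klDiv ν' (μ.map T) :=
  klDiv_posterior_map_eq_general μ T hT g hg_meas L hL Z ν hν ν' hν'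
end

section
/- (Gaussian information gain formula.) Let m ∈ ℝ and let v_t > 0 and v > 0 be variances. Consider the prior f ∼ N(m, v_t) (the Gaussian measure gaussianReal m v_t on ℝ) and, for each f ∈ ℝ, the observation law y | f ∼ N(f, v). Then ∫ D_KL( N(f, v) ‖ N(m, v_t + v) ) d(N(m, v_t))(f) = (1/2) · log(1 + v_t / v), where D_KL denotes the Kullback–Leibler divergence between the Gaussian measures (taken as a real number, which is finite here). -/
open MeasureTheory Real ProbabilityTheory
open scoped ENNReal NNReal

lemma toReal_klDiv_of_absolutelyContinuous {α : Type*} [MeasurableSpace α] {μ ν : Measure α}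
    [IsProbabilityMeasure μ] [IsProbabilityMeasure ν] (hμν : μ ≪ ν)
    (h_int : Integrable (llr μ ν) μ) :
    (klDiv μ ν).toReal = ∫ x, llr μ ν x ∂μ := by
  have h := InformationTheory.integral_llr_add_sub_measure_univ_nonneg hμν h_int
  simp only [probReal_univ, add_sub_cancel_right] at h
  rw [klDiv, if_pos ⟨hμν, h_int⟩, ENNReal.toReal_ofReal h]

section Gaussian

variable {μ : ℝ} {v : ℝ≥0}

lemma integrable_sub_sq_gaussianReal (c : ℝ) :
    Integrable (fun x ↦ (x - c) ^ 2) (gaussianReal μ v) :=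
  ((memLp_id_gaussianReal' 2 (by simp)).sub (memLp_const c)).integrable_sq

lemma integral_sub_sq_gaussianReal (c : ℝ) :
    ∫ x, (x - c) ^ 2 ∂gaussianReal μ v = v + (μ - c) ^ 2 := by
  have h := variance_eq_sub (memLp_id_gaussianReal' (μ := μ - c) (v := v) 2 (by simp))
  simp only [variance_id_gaussianReal, Pi.pow_apply, id_eq, integral_id_gaussianReal] at h
  rw [← integral_map_of_stronglyMeasurable (f := fun y ↦ y ^ 2) (φ := (· - c)) (by fun_prop)
    (by fun_prop), gaussianReal_map_sub_const]
  linarith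

lemma log_gaussianPDFReal (hv : v ≠ 0) (x : ℝ) :
    log (gaussianPDFReal μ v x) = -(log (2 * π) + log v) / 2 - (x - μ) ^ 2 / (2 * v) := by
  rw [gaussianPDFReal_def, log_mul (by positivity) (exp_pos _).ne', log_exp, log_inv,
    log_sqrt (by positivity), log_mul (by positivity) (by positivity)]
  ring

lemma llr_gaussianReal (m : ℝ) {s : ℝ≥0} (hv : v ≠ 0) (hs : s ≠ 0) :
    llr (gaussianReal μ v) (gaussianReal m s) =ᵐ[gaussianReal μ v]
      fun x ↦ log (gaussianPDFReal μ v x) - log (gaussianPDFReal m s x) := by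
  refine (gaussianReal_absolutelyContinuous μ hv).ae_eq ?_
  have h_right := Measure.rnDeriv_withDensity_right (gaussianReal μ v) volume
    (measurable_gaussianPDF m s).aemeasurable (ae_of_all _ fun x ↦ (gaussianPDF_pos m hs x).ne')
    (ae_of_all _ fun _ ↦ gaussianPDF_ne_top)
  rw [← gaussianReal_of_var_ne_zero m hs] at h_right
  filter_upwards [h_right, rnDeriv_gaussianReal μ v] with x hx hx'
  rw [llr, hx, hx', ENNReal.toReal_mul, ENNReal.toReal_inv, toReal_gaussianPDF,
    toReal_gaussianPDF, log_mul (inv_pos.2 (gaussianPDFReal_pos m s x hs)).ne'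
      (gaussianPDFReal_pos μ v x hv).ne', log_inv]
  ring

lemma integrable_log_gaussianPDFReal (m : ℝ) {s : ℝ≥0} (hs : s ≠ 0) :
    Integrable (fun x ↦ log (gaussianPDFReal m s x)) (gaussianReal μ v) := by
  simp_rw [log_gaussianPDFReal hs]
  exact (integrable_const _).sub ((integrable_sub_sq_gaussianReal m).div_const _)

lemma integral_log_gaussianPDFReal (m : ℝ) {s : ℝ≥0} (hs : s ≠ 0) :
    ∫ x, log (gaussianPDFReal m s x) ∂gaussianReal μ v
      = -(log (2 * π) + log s) / 2 - (v + (μ - m) ^ 2) / (2 * s) := by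
  simp_rw [log_gaussianPDFReal hs]
  rw [integral_sub (integrable_const _) ((integrable_sub_sq_gaussianReal m).div_const _),
    integral_const, integral_div, integral_sub_sq_gaussianReal, probReal_univ, one_smul]

lemma toReal_klDiv_gaussianReal (m : ℝ) {s : ℝ≥0} (hv : v ≠ 0) (hs : s ≠ 0) :
    (klDiv (gaussianReal μ v) (gaussianReal m s)).toReal
      = (log (s / v) + v / s - 1) / 2 + (μ - m) ^ 2 / (2 * s) := by
  have hllr := llr_gaussianReal (μ := μ) m hv hs
  have h_int_v : Integrable (fun x ↦ log (gaussianPDFReal μ v x)) (gaussianReal μ v) :=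
    integrable_log_gaussianPDFReal μ hv
  have h_int_s : Integrable (fun x ↦ log (gaussianPDFReal m s x)) (gaussianReal μ v) :=
    integrable_log_gaussianPDFReal m hs
  rw [toReal_klDiv_of_absolutelyContinuous ((gaussianReal_absolutelyContinuous μ hv).trans
      (gaussianReal_absolutelyContinuous' m hs)) ((h_int_v.sub h_int_s).congr hllr.symm),
    integral_congr_ae hllr, integral_sub h_int_v h_int_s, integral_log_gaussianPDFReal μ hv,
    integral_log_gaussianPDFReal m hs, sub_self, log_div (by positivity) (by positivity)]
  field_simp
  ring

end Gaussian

theorem gaussian_information_gain_general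
    (m : ℝ) (vt v : ℝ≥0) (hv : 0 < v) :
    ∫ f, (klDiv (gaussianReal f v) (gaussianReal m (vt + v))).toReal
        ∂(gaussianReal m vt) =
      (1 / 2) * Real.log (1 + (vt : ℝ) / (v : ℝ)) := by
  have hs : vt + v ≠ 0 := (hv.trans_le le_add_self).ne'
  simp_rw [toReal_klDiv_gaussianReal m hv.ne' hs]
  rw [integral_add (integrable_const _) ((integrable_sub_sq_gaussianReal m).div_const _),
    integral_const, integral_div, integral_sub_sq_gaussianReal]
  have hv' : (v : ℝ) ≠ 0 := by exact_mod_cast hv.ne'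
  simp only [probReal_univ, one_smul, sub_self, NNReal.coe_add]
  rw [show 1 + (vt : ℝ) / v = (vt + v) / v by field_simp; ring]
  field_simp
  ring

/-- Gaussian information gain formula: with prior `f ~ N(m, v_t)` and
observation law `y | f ~ N(f, v)`, the prior-averaged KL divergence of the
conditional observation law from the marginal observation law `N(m, v_t + v)`
equals `(1/2) log (1 + v_t / v)`. -/
theorem gaussian_information_gain
    (m : ℝ) (vt v : ℝ≥0) (hvt : 0 < vt) (hv : 0 < v) :
    ∫ f, (klDiv (gaussianReal f v) (gaussianReal m (vt + v))).toReal
        ∂(gaussianReal m vt) =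
      (1 / 2) * Real.log (1 + (vt : ℝ) / (v : ℝ)) :=
  gaussian_information_gain_general m vt v hv
end
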